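/- arXiv:2401.14138 — 2 statements merged into one kernel-verified Lean document; each statement's English description precedes it below -/
import Mathlib

section
/- Let n ≥ 1. If n ≡ 0, 2, or 3 (mod 4), or if n ≡ 1 (mod 4) and n = p^e for some prime p and some odd positive integer e, then the discriminant of F_n(x) is not the square of a rational number. -/
open Polynomial BigOperators

/-- `F n` is the truncated logarithmic polynomial `1 + x + x²/2 + ⋯ + xⁿ/n ∈ ℚ[x]`. -/
noncomputable def F (n : ℕ) : Polynomial ℚ :=
  1 + ∑ k ∈ Finset.Icc 1 n, Polynomial.C ((k : ℚ)⁻¹) * Polynomial.X ^ k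

/-- `Ln n = lcm {1, 2, …, n}`. -/
def Ln (n : ℕ) : ℕ := (Finset.Icc 1 n).lcm id

/-- `Ftilde n = Ln n • F n`, a polynomial with integer coefficients. -/
noncomputable def Ftilde (n : ℕ) : Polynomial ℚ := Polynomial.C ((Ln n : ℚ)) * F n

/-- The resultant `Res(P, Q)` of two polynomials over `ℚ`, computed in `ℂ` via the
product formula `Res(P,Q) = lc(P)^(deg Q) * ∏_{P(r)=0} Q(r)` (roots with multiplicity). -/
noncomputable def resC (P Q : Polynomial ℚ) : ℂ :=
  ((P.leadingCoeff : ℂ)) ^ Q.natDegree *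
    ((P.map (algebraMap ℚ ℂ)).roots.map (fun r => (Q.map (algebraMap ℚ ℂ)).eval r)).prod

/-- The discriminant `disc P = (−1)^(n(n−1)/2) ⬝ a_n⁻¹ ⬝ Res(P, P′)`, as a complex number. -/
noncomputable def discC (P : Polynomial ℚ) : ℂ :=
  (-1) ^ (P.natDegree.choose 2) * ((P.leadingCoeff : ℂ))⁻¹ * resC P (Polynomial.derivative P)

/-- `𝒫 n = ∏_θ F̃_n(θ)`, the product over the nontrivial `n`-th roots of unity in `ℂ`. -/
noncomputable def P (n : ℕ) : ℂ :=
  ∏ θ ∈ (Polynomial.nthRootsFinset n (1 : ℂ)).erase 1, (Polynomial.aeval θ) (Ftilde n)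

/-- `Xc m ω = ∏_{k=1}^{m−1} (1/m + ω^k + ω^{2k}/2 + ⋯ + ω^{(m−1)k}/(m−1))`. -/
noncomputable def Xc (m : ℕ) (ω : ℂ) : ℂ :=
  ∏ k ∈ Finset.Icc 1 (m - 1), ((m : ℂ)⁻¹ + ∑ j ∈ Finset.Icc 1 (m - 1), ω ^ (j * k) / (j : ℂ))

/-- `Y m = 1 + 1/2 + ⋯ + 1/m ∈ ℚ`. -/
def Y (m : ℕ) : ℚ := ∑ j ∈ Finset.Icc 1 m, (j : ℚ)⁻¹

/-!
Put `L = lcm(1, …, n)` and `F̃ = L • F n ∈ ℤ[x]`. Since `F n′ = 1 + x + ⋯ + x^(n-1)` is the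
product of `x - θ` over the `n`-th roots of unity `θ ≠ 1`, the discriminant is
`(-1)^(n(n-1)/2) · n · ∏_θ F n(θ)`, so `P n = ∏_θ F̃(θ) = ± L^(n-1) · disc / n`. If the
discriminant is a rational square `r²`, then `P n` is a rational algebraic integer, i.e. an
integer `z` with `z · n = ± r² · L^(n-1)`.

If `p^e ≤ n < 2 p^e`, then `k = p^e` is the only `k ≤ n` with `v_p(k) = v_p(L) = e`, so
`F̃ ≡ (L / p^e) x^(p^e)` modulo `p`, and `z ≡ ±(L / p^e)^(n-1) ≢ 0` modulo `p`. Comparing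
`p`-adic valuations then makes `v_p(n) + (n-1) e` even. A Bertrand prime `n/2 < p < n` contradicts
this for even `n ≥ 4`, and so does `n = p^e` with `e` odd. For `n ≡ 3 (mod 4)` the sign is `-1`
while `∏_θ F n(θ)` is a norm (the `θ` come in conjugate pairs, none real), so the discriminant
is negative. For `n = 2` the discriminant is `-1`.
-/

theorem F_succ (n : ℕ) : F (n + 1) = F n + C ((n + 1 : ℚ)⁻¹) * X ^ (n + 1) := by
  rw [F, F, Finset.sum_Icc_succ_top (by omega), add_assoc]
  push_cast; rfl

theorem natDegree_F_le (n : ℕ) : (F n).natDegree ≤ n := by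
  induction n with
  | zero => simp [F]
  | succ n ih =>
    rw [F_succ]
    exact natDegree_add_le_of_degree_le (ih.trans n.le_succ) (natDegree_C_mul_X_pow_le _ _)

theorem coeff_F_self {n : ℕ} (hn : n ≠ 0) : (F n).coeff n = (n : ℚ)⁻¹ := by
  obtain ⟨n, rfl⟩ := Nat.exists_eq_succ_of_ne_zero hn
  rw [F_succ, coeff_add, coeff_C_mul_X_pow, if_pos rfl,
    coeff_eq_zero_of_natDegree_lt ((natDegree_F_le n).trans_lt n.lt_succ_self)]
  push_cast; ring

theorem natDegree_F {n : ℕ} (hn : n ≠ 0) : (F n).natDegree = n :=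
  natDegree_eq_of_le_of_coeff_ne_zero (natDegree_F_le n) (by simp [coeff_F_self hn, hn])

theorem leadingCoeff_F {n : ℕ} (hn : n ≠ 0) : (F n).leadingCoeff = (n : ℚ)⁻¹ := by
  rw [leadingCoeff, natDegree_F hn, coeff_F_self hn]

theorem derivative_F (n : ℕ) : derivative (F n) = ∑ j ∈ Finset.range n, X ^ j := by
  induction n with
  | zero => simp [F]
  | succ n ih =>
    rw [F_succ, derivative_add, ih, Finset.sum_range_succ, derivative_C_mul_X_pow]
    congr
    rw [Nat.add_sub_cancel, Nat.cast_succ, inv_mul_cancel₀ (by positivity), C_1, one_mul]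

theorem resC_eq_prod_aeval {f g : ℚ[X]} {s : Finset ℂ}
    (hg : g.map (algebraMap ℚ ℂ) = ∏ θ ∈ s, (X - C θ)) :
    resC f g = (-1) ^ (f.natDegree * s.card) * ∏ θ ∈ s, aeval θ f := by
  set fC := f.map (algebraMap ℚ ℂ)
  have hroots : Multiset.card fC.roots = f.natDegree := by
    rw [splits_iff_card_roots.mp (IsAlgClosed.splits fC), natDegree_map]
  have hdeg : g.natDegree = s.card := by
    rw [← natDegree_map (algebraMap ℚ ℂ), hg]
    exact natDegree_multiset_prod_X_sub_C_eq_card s.val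
  have haeval (x : ℂ) : aeval x f = (f.leadingCoeff : ℂ) * (fC.roots.map (x - ·)).prod := by
    rw [aeval_def, ← eval_map]
    change fC.eval x = _
    conv_lhs =>
      rw [← C_leadingCoeff_mul_prod_multiset_X_sub_C (hroots.trans (natDegree_map _).symm)]
    simp [eval_multiset_prod, leadingCoeff_map, fC]
  have hswap : (fC.roots.map fun r ↦ ∏ θ ∈ s, (r - θ)).prod
      = ∏ θ ∈ s, ((-1) ^ f.natDegree * (fC.roots.map (θ - ·)).prod) := by
    simp_rw [Finset.prod_eq_multiset_prod]
    rw [Multiset.prod_map_prod_map]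
    refine congrArg _ (Multiset.map_congr rfl fun θ _ ↦ ?_)
    rw [← hroots, ← Multiset.card_map (θ - ·), ← Multiset.prod_map_neg, Multiset.map_map]
    simp
  rw [resC, hdeg, hg]
  simp_rw [eval_prod, eval_sub, eval_X, eval_C]
  rw [hswap]
  simp_rw [haeval, Finset.prod_mul_distrib, Finset.prod_const, pow_mul]
  ring

noncomputable def nontrivialRoots (n : ℕ) : Finset ℂ := (nthRootsFinset n (1 : ℂ)).erase 1

theorem card_nontrivialRoots {n : ℕ} (hn : n ≠ 0) : (nontrivialRoots n).card = n - 1 := by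
  rw [nontrivialRoots, Finset.card_erase_of_mem (one_mem_nthRootsFinset (by omega)),
    (Complex.isPrimitiveRoot_exp n hn).card_nthRootsFinset]

theorem geom_sum_X_eq_prod_nontrivialRoots {n : ℕ} (hn : n ≠ 0) :
    ∑ j ∈ Finset.range n, (X : ℂ[X]) ^ j = ∏ θ ∈ nontrivialRoots n, (X - C θ) := by
  apply mul_left_cancel₀ (X_sub_C_ne_zero (1 : ℂ))
  rw [mul_comm, C_1, geom_sum_mul,
    X_pow_sub_one_eq_prod (by omega) (Complex.isPrimitiveRoot_exp n hn), nontrivialRoots,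
    ← Finset.mul_prod_erase _ _ (one_mem_nthRootsFinset (by omega)), C_1]

theorem prod_nontrivialRoots {n : ℕ} (hn : n ≠ 0) :
    ∏ θ ∈ nontrivialRoots n, θ = (-1) ^ (n - 1) := by
  have h := congrArg (eval 0) (geom_sum_X_eq_prod_nontrivialRoots hn)
  simp only [eval_finsetSum, eval_pow, eval_X, eval_prod, eval_sub, eval_C, zero_sub] at h
  rw [Finset.sum_eq_single_of_mem 0 (by simp [Nat.pos_of_ne_zero hn])
    (fun j _ hj ↦ zero_pow hj), pow_zero, Finset.prod_neg, card_nontrivialRoots hn] at h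
  have hsq : ((-1 : ℂ) ^ (n - 1)) ^ 2 = 1 := by rw [← pow_mul, pow_mul', neg_one_sq, one_pow]
  linear_combination (-(-1 : ℂ) ^ (n - 1)) * h - (∏ θ ∈ nontrivialRoots n, θ) * hsq

theorem isIntegral_of_mem_nontrivialRoots {n : ℕ} {θ : ℂ} (hθ : θ ∈ nontrivialRoots n) :
    IsIntegral ℤ θ := by
  have hn : 0 < n := by
    rcases n with _ | n
    · simp [nontrivialRoots] at hθ
    · omega
  exact ⟨X ^ n - 1, monic_X_pow_sub_C 1 hn.ne', by
    simp [(mem_nthRootsFinset hn 1).mp (Finset.mem_of_mem_erase hθ)]⟩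

theorem conj_mem_nontrivialRoots {n : ℕ} {θ : ℂ} (hθ : θ ∈ nontrivialRoots n) :
    (starRingEnd ℂ) θ ∈ nontrivialRoots n := by
  rw [nontrivialRoots, Finset.mem_erase] at hθ ⊢
  exact ⟨by rw [Ne, map_eq_one_iff _ (starRingEnd ℂ).injective]; exact hθ.1,
    map_mem_nthRootsFinset_one hθ.2 _⟩

theorem im_ne_zero_of_mem_nontrivialRoots {n : ℕ} (hn : Odd n) {θ : ℂ}
    (hθ : θ ∈ nontrivialRoots n) : θ.im ≠ 0 := by
  intro him
  rw [nontrivialRoots, Finset.mem_erase, mem_nthRootsFinset hn.pos] at hθ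
  have hre : θ = (θ.re : ℂ) := Complex.ext rfl (by simp [him])
  have hpow : ((θ.re ^ n : ℝ) : ℂ) = ((1 ^ n : ℝ) : ℂ) := by
    push_cast
    rw [← hre, hθ.2, one_pow]
  have hre1 : θ.re = 1 := hn.pow_inj.1 (by exact_mod_cast hpow)
  exact hθ.1 (by rw [hre, hre1, Complex.ofReal_one])

theorem discC_F {n : ℕ} (hn : n ≠ 0) :
    discC (F n) = (-1) ^ n.choose 2 * n * ∏ θ ∈ nontrivialRoots n, aeval θ (F n) := by
  have hQ : (derivative (F n)).map (algebraMap ℚ ℂ) = ∏ θ ∈ nontrivialRoots n, (X - C θ) := by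
    rw [derivative_F, Polynomial.map_sum, ← geom_sum_X_eq_prod_nontrivialRoots hn]
    simp
  rw [discC, resC_eq_prod_aeval hQ, natDegree_F hn, leadingCoeff_F hn, card_nontrivialRoots hn,
    (Nat.even_mul_pred_self n).neg_one_pow, one_mul]
  push_cast
  rw [inv_inv]

theorem dvd_Ln {n k : ℕ} (hk : k ∈ Finset.Icc 1 n) : k ∣ Ln n := Finset.dvd_lcm hk

theorem Ln_ne_zero (n : ℕ) : Ln n ≠ 0 := Nat.lcmUpto_ne_zero n

section Valuation

variable {p e n : ℕ} [hp : Fact p.Prime]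

theorem padicValNat_Ln (h1 : p ^ e ≤ n) (h2 : n < p ^ (e + 1)) : padicValNat p (Ln n) = e := by
  rw [← Nat.factorization_def _ hp.out]
  exact (Nat.factorization_lcmUpto n hp.out).trans (Nat.log_eq_of_pow_le_of_lt_pow h1 h2)

variable (h1 : p ^ e ≤ n)
include h1

theorem pow_mem_Icc : p ^ e ∈ Finset.Icc 1 n :=
  Finset.mem_Icc.2 ⟨Nat.one_le_pow _ _ hp.out.pos, h1⟩

variable (h2 : n < 2 * p ^ e)
include h2

theorem padicValNat_Ln_of_lt_two_mul : padicValNat p (Ln n) = e :=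
  padicValNat_Ln h1 (h2.trans_le (by rw [pow_succ']; gcongr; exact hp.out.two_le))

theorem dvd_Ln_div {k : ℕ} (hk : k ∈ Finset.Icc 1 n) (hke : k ≠ p ^ e) : p ∣ Ln n / k := by
  have hk0 : k ≠ 0 := by grind
  have hvk : padicValNat p k < e := by
    by_contra! hek
    obtain ⟨c, rfl⟩ := (padicValNat_dvd_iff_le hk0).2 hek
    rw [Finset.mem_Icc] at hk
    have : c < 2 := by by_contra! hc; nlinarith [Nat.mul_le_mul_left (p ^ e) hc]
    interval_cases c <;> simp_all
  apply dvd_of_one_le_padicValNat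
  rw [padicValNat.div_of_dvd (dvd_Ln hk), padicValNat_Ln_of_lt_two_mul h1 h2]
  omega

theorem not_dvd_Ln_div_pow : ¬ p ∣ Ln n / p ^ e := by
  intro h
  have hL := dvd_Ln (pow_mem_Icc h1)
  have := one_le_padicValNat_of_dvd
    (Nat.div_ne_zero_iff_of_dvd hL |>.2 ⟨Ln_ne_zero n, (pow_pos hp.out.pos e).ne'⟩) h
  rw [padicValNat.div_pow hL, padicValNat_Ln_of_lt_two_mul h1 h2] at this
  omega

end Valuation

theorem exists_intCast_eq_of_isIntegral {K : Type*} [Field K] [CharZero K] {q : ℚ}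
    (h : IsIntegral ℤ (q : K)) : ∃ z : ℤ, (z : ℚ) = q := by
  have hq : IsIntegral ℤ q := (isIntegral_algHom_iff (algebraMap ℚ K).toIntAlgHom
    (algebraMap ℚ K).injective).mp (by simpa using h)
  obtain ⟨z, hz⟩ := IsIntegrallyClosed.isIntegral_iff.mp hq
  exact ⟨z, by simpa using hz⟩

theorem dvd_of_intCast_eq_mul_of_isIntegral {K : Type*} [Field K] [CharZero K] {a b : ℤ} {c : K}
    (ha : a ≠ 0) (hc : IsIntegral ℤ c) (h : (b : K) = a * c) : a ∣ b := by
  have hc' : c = ((b / a : ℚ) : K) := by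
    push_cast
    rw [h, mul_div_cancel_left₀ _ (by exact_mod_cast ha)]
  obtain ⟨k, hk⟩ := exists_intCast_eq_of_isIntegral (hc' ▸ hc)
  refine ⟨k, ?_⟩
  have : (b : ℚ) = a * k := by rw [hk, mul_div_cancel₀ _ (by exact_mod_cast ha)]
  exact_mod_cast this

theorem exists_prod_eq_prod_add_mul {A ι S : Type*} [CommSemiring A] [SetLike S A]
    [SubsemiringClass S A] {R : S} {p : A} (hp : p ∈ R) {s : Finset ι} {x y : ι → A}
    (hy : ∀ i ∈ s, y i ∈ R) (hxy : ∀ i ∈ s, ∃ c ∈ R, x i = y i + p * c) :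
    ∃ c ∈ R, ∏ i ∈ s, x i = ∏ i ∈ s, y i + p * c := by
  classical
  induction s using Finset.induction_on with
  | empty => exact ⟨0, zero_mem R, by simp⟩
  | insert i s hi ih =>
    obtain ⟨c, hc, hxc⟩ := hxy i (Finset.mem_insert_self i s)
    obtain ⟨d, hd, hxd⟩ := ih (fun j hj ↦ hy j (Finset.mem_insert_of_mem hj))
      (fun j hj ↦ hxy j (Finset.mem_insert_of_mem hj))
    have hyi := hy i (Finset.mem_insert_self i s)
    have hY : ∏ j ∈ s, y j ∈ R := prod_mem fun j hj ↦ hy j (Finset.mem_insert_of_mem hj)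
    refine ⟨y i * d + c * ∏ j ∈ s, y j + p * c * d, ?_, ?_⟩
    · exact add_mem (add_mem (mul_mem hyi hd) (mul_mem hc hY)) (mul_mem (mul_mem hp hc) hd)
    · rw [Finset.prod_insert hi, Finset.prod_insert hi, hxc, hxd]
      ring

theorem aeval_Ftilde (n : ℕ) (θ : ℂ) :
    aeval θ (Ftilde n) = Ln n + ∑ k ∈ Finset.Icc 1 n, ((Ln n / k : ℕ) : ℂ) * θ ^ k := by
  simp only [Ftilde, F, map_mul, map_add, map_sum, aeval_C, aeval_X, map_pow,
    eq_ratCast, mul_add, mul_one, Finset.mul_sum]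
  push_cast
  congr 1
  refine Finset.sum_congr rfl fun k hk ↦ ?_
  rw [Nat.cast_div (dvd_Ln hk) (Nat.cast_ne_zero.2 (by grind))]
  ring

theorem aeval_Ftilde_mem_integralClosure {n : ℕ} {θ : ℂ} (hθ : IsIntegral ℤ θ) :
    aeval θ (Ftilde n) ∈ integralClosure ℤ ℂ := by
  rw [aeval_Ftilde]
  exact add_mem (natCast_mem _ _) (sum_mem fun k _ ↦ mul_mem (natCast_mem _ _) (pow_mem hθ k))

theorem exists_aeval_Ftilde_eq_add_mul {p e n : ℕ} [Fact p.Prime] (he : e ≠ 0)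
    (h1 : p ^ e ≤ n) (h2 : n < 2 * p ^ e) {θ : ℂ} (hθ : IsIntegral ℤ θ) :
    ∃ c ∈ integralClosure ℤ ℂ,
      aeval θ (Ftilde n) = ((Ln n / p ^ e : ℕ) : ℂ) * θ ^ p ^ e + p * c := by
  have hcast (a : ℕ) (ha : p ∣ a) : (a : ℂ) = p * (a / p : ℕ) := by
    rw [← Nat.cast_mul, Nat.mul_div_cancel' ha]
  have hL : p ∣ Ln n := (dvd_pow_self p he).trans (dvd_Ln (pow_mem_Icc h1))
  refine ⟨(Ln n / p : ℕ) + ∑ k ∈ (Finset.Icc 1 n).erase (p ^ e), ((Ln n / k / p : ℕ) : ℂ) * θ ^ k,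
    add_mem (natCast_mem _ _) (sum_mem fun k _ ↦ mul_mem (natCast_mem _ _) (pow_mem hθ k)), ?_⟩
  rw [aeval_Ftilde, ← Finset.add_sum_erase _ _ (pow_mem_Icc h1), hcast _ hL,
    Finset.sum_congr rfl fun k hk ↦ by
      rw [hcast _ (dvd_Ln_div h1 h2 (Finset.mem_of_mem_erase hk) (Finset.ne_of_mem_erase hk)),
        mul_assoc]]
  rw [← Finset.mul_sum]
  ring

theorem P_eq_prod (n : ℕ) : P n = ∏ θ ∈ nontrivialRoots n, aeval θ (Ftilde n) := rfl

theorem P_eq_mul_prod {n : ℕ} (hn : n ≠ 0) :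
    P n = (Ln n : ℂ) ^ (n - 1) * ∏ θ ∈ nontrivialRoots n, aeval θ (F n) := by
  simp only [P_eq_prod, Ftilde, map_mul, aeval_C, eq_ratCast, Rat.cast_natCast,
    Finset.prod_mul_distrib, Finset.prod_const, card_nontrivialRoots hn]

theorem exists_intCast_eq_P {n : ℕ} (hn : n ≠ 0) {r : ℚ} (hr : (r : ℂ) ^ 2 = discC (F n)) :
    ∃ z : ℤ, (z : ℂ) = P n ∧ (z : ℚ) * n = (-1) ^ n.choose 2 * r ^ 2 * Ln n ^ (n - 1) := by
  have hnq : (n : ℚ) ≠ 0 := by exact_mod_cast hn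
  set q : ℚ := (-1) ^ n.choose 2 * r ^ 2 * Ln n ^ (n - 1) / n
  have hq : (q : ℂ) = P n := by
    have hsign : ((-1 : ℂ) ^ n.choose 2) ^ 2 = 1 := by rw [← pow_mul, pow_mul', neg_one_sq, one_pow]
    simp only [q, Rat.cast_div, Rat.cast_mul, Rat.cast_pow, Rat.cast_neg, Rat.cast_one,
      Rat.cast_natCast, hr, discC_F hn, P_eq_mul_prod hn]
    field_simp
    linear_combination (↑(Ln n) ^ (n - 1) * ∏ θ ∈ nontrivialRoots n, aeval θ (F n)) * hsign
  have hP : IsIntegral ℤ (P n) := prod_mem fun θ hθ ↦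
    aeval_Ftilde_mem_integralClosure (isIntegral_of_mem_nontrivialRoots hθ)
  obtain ⟨z, hz⟩ := exists_intCast_eq_of_isIntegral (hq ▸ hP : IsIntegral ℤ (q : ℂ))
  refine ⟨z, by rw [← hq, ← hz, Rat.cast_intCast], ?_⟩
  rw [hz, div_mul_cancel₀ _ hnq]

theorem not_dvd_of_intCast_eq_P {p e n : ℕ} (hp : p.Prime) (he : e ≠ 0) (h1 : p ^ e ≤ n)
    (h2 : n < 2 * p ^ e) {z : ℤ} (hz : (z : ℂ) = P n) : ¬ (p : ℤ) ∣ z := by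
  have := Fact.mk hp
  have hn : n ≠ 0 := by have := Nat.one_le_pow e p hp.pos; omega
  set a := Ln n / p ^ e
  obtain ⟨c, hc, hPc⟩ := exists_prod_eq_prod_add_mul (natCast_mem (integralClosure ℤ ℂ) p)
    (s := nontrivialRoots n) (y := fun θ ↦ (a : ℂ) * θ ^ p ^ e)
    (fun θ hθ ↦ mul_mem (natCast_mem _ _) (pow_mem (isIntegral_of_mem_nontrivialRoots hθ) _))
    (fun θ hθ ↦ exists_aeval_Ftilde_eq_add_mul he h1 h2 (isIntegral_of_mem_nontrivialRoots hθ))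
  have hprod : ∏ θ ∈ nontrivialRoots n, (a : ℂ) * θ ^ p ^ e
      = (((a : ℤ) ^ (n - 1) * (-1) ^ ((n - 1) * p ^ e) : ℤ) : ℂ) := by
    rw [Finset.prod_mul_distrib, Finset.prod_const, Finset.prod_pow, prod_nontrivialRoots hn,
      card_nontrivialRoots hn]
    push_cast
    ring
  have hdvd : (p : ℤ) ∣ z - (a : ℤ) ^ (n - 1) * (-1) ^ ((n - 1) * p ^ e) := by
    refine dvd_of_intCast_eq_mul_of_isIntegral (by exact_mod_cast hp.ne_zero) hc ?_
    rw [Int.cast_sub, hz, ← hprod, P_eq_prod, hPc]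
    push_cast
    ring
  intro hpz
  have hpa : (p : ℤ) ∣ (a : ℤ) ^ (n - 1) := by
    have := dvd_sub hpz hdvd
    rwa [sub_sub_cancel, (isUnit_neg_one.pow _).dvd_mul_right] at this
  exact not_dvd_Ln_div_pow h1 h2 (hp.dvd_of_dvd_pow (by exact_mod_cast hpa))

theorem even_padicValNat_add_of_sq_eq_discC {p e n : ℕ} (hp : p.Prime) (he : e ≠ 0)
    (h1 : p ^ e ≤ n) (h2 : n < 2 * p ^ e) {r : ℚ} (hr : (r : ℂ) ^ 2 = discC (F n)) :
    Even (padicValNat p n + (n - 1) * e) := by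
  have := Fact.mk hp
  have hn : n ≠ 0 := by have := Nat.one_le_pow e p hp.pos; omega
  obtain ⟨z, hzP, hzn⟩ := exists_intCast_eq_P hn hr
  have hpz := not_dvd_of_intCast_eq_P hp he h1 h2 hzP
  have hz0 : z ≠ 0 := by rintro rfl; exact hpz (dvd_zero _)
  have hr0 : r ≠ 0 := by rintro rfl; simp [hz0, hn] at hzn
  have hv := congrArg (padicValRat p) hzn
  rw [padicValRat.mul (by exact_mod_cast hz0) (by exact_mod_cast hn),
    padicValRat.mul (by simp [hr0]) (by simp [Ln_ne_zero]),
    padicValRat.mul (by simp) (by simp [hr0]), padicValRat.pow, padicValRat.pow,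
    padicValRat.pow, padicValRat.neg, padicValRat.one, padicValRat.of_int,
    padicValInt.eq_zero_of_not_dvd hpz, padicValRat.of_nat, padicValRat.of_nat,
    padicValNat_Ln_of_lt_two_mul h1 h2] at hv
  rw [← Int.even_coe_nat]
  refine ⟨padicValRat p r + (n - 1 : ℕ) * e, ?_⟩
  push_cast at hv ⊢
  linear_combination hv

theorem exists_prime_le_lt_two_mul {n : ℕ} (hn : 2 ≤ n) : ∃ p, p.Prime ∧ p ≤ n ∧ n < 2 * p := by
  obtain ⟨p, hp, hlt, hle⟩ := Nat.exists_prime_lt_and_le_two_mul (n / 2) (by omega)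
  exact ⟨p, hp, by omega, by omega⟩

theorem sq_ne_discC_F_of_even {n : ℕ} (hn : 4 ≤ n) (heven : Even n) (r : ℚ) :
    (r : ℂ) ^ 2 ≠ discC (F n) := by
  intro hr
  obtain ⟨p, hp, hpn, hnp⟩ := exists_prime_le_lt_two_mul (n := n) (by omega)
  have hpn' : ¬ p ∣ n := by
    rintro ⟨c, rfl⟩
    have : c < 2 := by by_contra! hc; nlinarith
    interval_cases c
    · omega
    · exact Nat.not_even_iff_odd.2 (hp.odd_of_ne_two (by omega)) (by simpa using heven)
  have := even_padicValNat_add_of_sq_eq_discC hp one_ne_zero (by simpa) (by simpa) hr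
  rw [padicValNat.eq_zero_of_not_dvd hpn', zero_add, mul_one] at this
  obtain ⟨k, hk⟩ := heven
  obtain ⟨j, hj⟩ := this
  omega

theorem sq_ne_discC_F_of_prime_pow {p e : ℕ} (hp : p.Prime) (he : Odd e) (hpe : Odd (p ^ e))
    (r : ℚ) : (r : ℂ) ^ 2 ≠ discC (F (p ^ e)) := by
  intro hr
  have := Fact.mk hp
  have hpos := Nat.one_le_pow e p hp.pos
  have := even_padicValNat_add_of_sq_eq_discC hp he.pos.ne' le_rfl (by omega) hr
  rw [padicValNat.prime_pow, add_comm, ← Nat.succ_mul, Nat.succ_eq_add_one,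
    Nat.sub_add_cancel hpos] at this
  exact Nat.not_even_iff_odd.2 (hpe.mul he) this

theorem aeval_conj (q : ℚ[X]) (θ : ℂ) :
    aeval (starRingEnd ℂ θ) q = starRingEnd ℂ (aeval θ q) :=
  aeval_algHom_apply (starRingEnd ℂ).toRatAlgHom θ q

open ComplexConjugate in
theorem prod_eq_normSq_of_conj_mem {s : Finset ℂ} {f : ℂ → ℂ} (hs : ∀ θ ∈ s, conj θ ∈ s)
    (him : ∀ θ ∈ s, θ.im ≠ 0) (hf : ∀ θ, f (conj θ) = conj (f θ)) :
    ∏ θ ∈ s, f θ = Complex.normSq (∏ θ ∈ s.filter (0 < ·.im), f θ) := by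
  have hlower : ∏ θ ∈ s.filter (¬ 0 < ·.im), f θ = ∏ θ ∈ s.filter (0 < ·.im), conj (f θ) := by
    refine Finset.prod_nbij' conj conj (fun θ hθ ↦ ?_) (fun θ hθ ↦ ?_)
      (fun θ _ ↦ Complex.conj_conj θ) (fun θ _ ↦ Complex.conj_conj θ)
      (fun θ _ ↦ by rw [← hf, Complex.conj_conj])
    · rw [Finset.mem_filter] at hθ ⊢
      rw [Complex.conj_im, neg_pos]
      exact ⟨hs θ hθ.1, lt_of_le_of_ne (not_lt.1 hθ.2) (him θ hθ.1)⟩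
    · rw [Finset.mem_filter] at hθ ⊢
      rw [Complex.conj_im, neg_pos, not_lt]
      exact ⟨hs θ hθ.1, hθ.2.le⟩
  rw [← Finset.prod_filter_mul_prod_filter_not s (0 < ·.im), hlower, ← Finset.prod_mul_distrib,
    map_prod, Complex.ofReal_prod]
  simp_rw [Complex.mul_conj]

theorem P_eq_mul_normSq {n : ℕ} (hn : Odd n) :
    P n = (Ln n : ℂ) ^ (n - 1) *
      Complex.normSq (∏ θ ∈ (nontrivialRoots n).filter (0 < ·.im), aeval θ (F n)) := by
  rw [P_eq_mul_prod hn.pos.ne', prod_eq_normSq_of_conj_mem (fun θ ↦ conj_mem_nontrivialRoots)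
    (fun θ ↦ im_ne_zero_of_mem_nontrivialRoots hn) (fun θ ↦ aeval_conj (F n) θ)]

theorem odd_choose_two_of_mod_four_eq_three {n : ℕ} (hn : n % 4 = 3) : Odd (n.choose 2) := by
  obtain ⟨k, rfl⟩ : ∃ k, n = 4 * k + 3 := ⟨n / 4, by omega⟩
  rw [Nat.choose_two_right, show (4 * k + 3) * (4 * k + 3 - 1) = 2 * ((4 * k + 3) * (2 * k + 1))
    by rw [Nat.add_sub_assoc (by omega)]; ring, Nat.mul_div_cancel_left _ two_pos]
  exact Nat.odd_mul.2 ⟨⟨2 * k + 1, by ring⟩, ⟨k, by ring⟩⟩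

theorem sq_ne_discC_F_of_mod_four_eq_three {n : ℕ} (hn : n % 4 = 3) (r : ℚ) :
    (r : ℂ) ^ 2 ≠ discC (F n) := by
  intro hr
  obtain ⟨p, hp, hpn, hnp⟩ := exists_prime_le_lt_two_mul (n := n) (by omega)
  obtain ⟨z, hzP, hzn⟩ := exists_intCast_eq_P (by omega) hr
  have hz0 : z ≠ 0 := by
    rintro rfl
    exact not_dvd_of_intCast_eq_P hp one_ne_zero (by simpa) (by simpa) hzP (dvd_zero _)
  have hz_nonpos : z ≤ 0 := by
    rw [(odd_choose_two_of_mod_four_eq_three hn).neg_one_pow] at hzn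
    have hzn' : (z : ℚ) * n ≤ 0 := by
      rw [hzn, neg_one_mul, neg_mul, neg_nonpos]
      positivity
    exact_mod_cast nonpos_of_mul_nonpos_left hzn' (by exact_mod_cast (by omega : 0 < n))
  have hz_nonneg : 0 ≤ z := by
    rw [P_eq_mul_normSq (Nat.odd_iff.2 (by omega))] at hzP
    have hzR : (z : ℝ) = (Ln n : ℝ) ^ (n - 1) * Complex.normSq
        (∏ θ ∈ (nontrivialRoots n).filter (0 < ·.im), aeval θ (F n)) := by
      exact_mod_cast hzP
    exact_mod_cast hzR ▸ mul_nonneg (by positivity) (Complex.normSq_nonneg _)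
  omega

theorem discC_F_two : discC (F 2) = -1 := by
  have h : nontrivialRoots 2 = {-1} := by
    ext θ
    simp only [nontrivialRoots, nthRootsFinset_def, nthRoots_two_one, Multiset.insert_eq_cons,
      Multiset.toFinset_cons, Multiset.toFinset_singleton, Finset.mem_erase, Finset.mem_insert,
      Finset.mem_singleton]
    grind
  rw [discC_F two_ne_zero, h, Finset.prod_singleton]
  simp [F, Finset.sum_Icc_succ_top]

theorem sq_ne_discC_F_two (r : ℚ) : (r : ℂ) ^ 2 ≠ discC (F 2) := by
  rw [discC_F_two]
  intro hr
  have : r ^ 2 = -1 := by exact_mod_cast hr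
  nlinarith [sq_nonneg r]

/-- If `n ≥ 1` and `n ≡ 0, 2, 3 (mod 4)`, or `n ≡ 1 (mod 4)` and `n` is an odd
power of a prime, then `disc(F n)` is not the square of a rational number. -/
theorem stmt0 (n : ℕ) (hn : 1 ≤ n)
    (h : (n % 4 = 0 ∨ n % 4 = 2 ∨ n % 4 = 3) ∨
      (n % 4 = 1 ∧ ∃ p e : ℕ, p.Prime ∧ Odd e ∧ 0 < e ∧ n = p ^ e)) :
    ¬ ∃ r : ℚ, (r : ℂ) ^ 2 = discC (F n) := by
  rintro ⟨r, hr⟩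
  rcases h with (h0 | h2 | h3) | ⟨h1, p, e, hp, he, -, rfl⟩
  · exact sq_ne_discC_F_of_even (by omega) (Nat.even_iff.2 (by omega)) r hr
  · obtain rfl | h4 : n = 2 ∨ 4 ≤ n := by omega
    · exact sq_ne_discC_F_two r hr
    · exact sq_ne_discC_F_of_even h4 (Nat.even_iff.2 (by omega)) r hr
  · exact sq_ne_discC_F_of_mod_four_eq_three h3 r hr
  · exact sq_ne_discC_F_of_prime_pow hp he (Nat.odd_iff.2 (by omega)) r hr
end

section
/- For every positive integer m, the complex number X(m) = ∏_{k=1}^{m−1} (1/m + ω^k + ω^{2k}/2 + ⋯ + ω^{(m−1)k}/(m−1)), where ω ∈ ℂ is a primitive m-th root of unity, is a rational number. -/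
open Polynomial BigOperators

/-! The numbers `ω^k`, `1 ≤ k ≤ m - 1`, are exactly the roots of the rational polynomial
`1 + X + ⋯ + X^(m-1)`, and `X(m)` is the product of the values of the rational polynomial
`g = 1/m + X + X²/2 + ⋯ + X^(m-1)/(m-1)` at these roots. Such a product is the resultant of the
two polynomials, a polynomial expression in their coefficients, hence rational. -/

open Finset

theorem Polynomial.prod_eval_mem_range_of_map_eq_prod_X_sub_C {R S ι : Type*} [CommRing R]
    [CommRing S] [Nontrivial S] (φ : R →+* S) {f : R[X]} (g : R[X]) {s : Finset ι} {r : ι → S}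
    (hf : f.map φ = ∏ i ∈ s, (X - C (r i))) :
    ∏ i ∈ s, (g.map φ).eval (r i) ∈ φ.range := by
  have hg : (g.map φ).natDegree ≤ g.natDegree := natDegree_map_le
  refine ⟨resultant f g (f.map φ).natDegree g.natDegree, ?_⟩
  rw [← resultant_map_map, hf, resultant_prod_left _ _ _ _ (by simp) hg]
  exact prod_congr rfl fun i _ ↦ by rw [natDegree_X_sub_C, resultant_X_sub_C_left _ _ _ hg]

theorem IsPrimitiveRoot.geom_sum_X_eq_prod {R : Type*} [CommRing R] [IsDomain R] {n : ℕ}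
    {μ : R} (hμ : IsPrimitiveRoot μ (n + 1)) :
    ∑ i ∈ range (n + 1), (X : R[X]) ^ i = ∏ k ∈ Icc 1 n, (X - C (μ ^ k)) := by
  rw [← Ico_add_one_right_eq_Icc, prod_Ico_eq_prod_range, add_tsub_cancel_right]
  refine mul_right_cancel₀ (X_sub_C_ne_zero (1 : R)) ?_
  rw [C_1, geom_sum_mul, ← C_1, X_pow_sub_C_eq_prod hμ n.succ_pos (one_pow _), prod_range_succ']
  simp only [mul_one, pow_zero, add_comm 1]

/-- For every positive integer `m` and every primitive `m`-th root of unity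
`ω ∈ ℂ`, the complex number `X(m)` is a rational number. -/
theorem stmt9 (m : ℕ) (hm : 0 < m) (ω : ℂ) (hω : IsPrimitiveRoot ω m) :
    ∃ r : ℚ, (r : ℂ) = Xc m ω := by
  obtain ⟨n, rfl⟩ : ∃ n, m = n + 1 := ⟨m - 1, by omega⟩
  let g : ℚ[X] := C ((n + 1 : ℚ)⁻¹) + ∑ j ∈ Icc 1 n, C ((j : ℚ)⁻¹) * X ^ j
  have hXc : Xc (n + 1) ω = ∏ k ∈ Icc 1 n, (g.map (algebraMap ℚ ℂ)).eval (ω ^ k) := by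
    refine prod_congr (by simp) fun k _ ↦ ?_
    simp only [g, Polynomial.map_add, Polynomial.map_sum, Polynomial.map_mul, Polynomial.map_pow,
      map_C, map_X, eval_add, eval_finsetSum, eval_mul, eval_C, eval_pow, eval_X]
    push_cast
    refine congrArg _ (sum_congr (by simp) fun j _ ↦ ?_)
    rw [← pow_mul, mul_comm k, div_eq_inv_mul]
  have hgeom : (∑ i ∈ range (n + 1), (X : ℚ[X]) ^ i).map (algebraMap ℚ ℂ) =
      ∏ k ∈ Icc 1 n, (X - C (ω ^ k)) := by
    simpa [Polynomial.map_sum] using hω.geom_sum_X_eq_prod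
  obtain ⟨r, hr⟩ := prod_eval_mem_range_of_map_eq_prod_X_sub_C _ g hgeom
  exact ⟨r, by rw [hXc, ← hr]; rfl⟩
end
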